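/- Assume (H), and let (c*, φ*) be a sharp wave pair: c* > 0 and φ* : ℝ → ℝ continuous with φ* = 0 on (−∞, 0], φ* > 0 on (0, ∞), φ* and (φ*)^m differentiable and (φ*)^m twice differentiable on (0, ∞), ((φ*)^m)'(ξ) → 0 as ξ → 0⁺, c*·(φ*)'(ξ) = ((φ*)^m)''(ξ) − d(φ*(ξ)) + b(φ*(ξ − c*·r)) for all ξ > 0, φ* monotone increasing with φ*(ξ) → κ as ξ → +∞. Then φ* is strictly increasing on (0, ∞), ((φ*)^m)'(ξ) > 0 for all ξ ∈ (0, ∞), and ((φ*)^m)'(ξ) → 0 as ξ → +∞. Equivalently, the phase function ψ̃_{c*} of the sharp wave satisfies ψ̃_{c*}(v) > 0 for all v ∈ (0, κ) and ψ̃_{c*}(v) → 0 as v → 0⁺ and as v → κ⁻. -/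

import Mathlib

open Real Filter Set MeasureTheory

/-- Standing hypotheses (H): degenerate Fisher-KPP data. -/
structure FisherData where
  m : ℝ
  r : ℝ
  d : ℝ → ℝ
  b : ℝ → ℝ
  κ : ℝ
  hm : 1 < m
  hr : 0 ≤ r
  hd_smooth : ContDiffOn ℝ 2 d (Set.Ici 0)
  hb_smooth : ContDiffOn ℝ 2 b (Set.Ici 0)
  hd0 : d 0 = 0
  hb0 : b 0 = 0
  hκ : 0 < κ
  heq : d κ = b κ
  hsign : ∀ s : ℝ, 0 < s → s ≠ κ → (b s - d s) * (s - κ) < 0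
  hbd0 : derivWithin d (Set.Ici 0) 0 < derivWithin b (Set.Ici 0) 0
  hd0' : 0 ≤ derivWithin d (Set.Ici 0) 0
  hd' : ∀ s : ℝ, 0 ≤ s → 0 ≤ derivWithin d (Set.Ici 0) s
  hb' : ∀ s : ℝ, 0 ≤ s → 0 ≤ derivWithin b (Set.Ici 0) s

/-- The function `φ^m` (real power). -/
noncomputable def phiPow (m : ℝ) (φ : ℝ → ℝ) : ℝ → ℝ := fun ξ => φ ξ ^ m

/-- A sharp (semi-compactly supported) traveling wave profile with speed `c`. -/
def IsSharpWave (D : FisherData) (c : ℝ) (φ : ℝ → ℝ) : Prop :=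
  Continuous φ ∧
  (∀ ξ : ℝ, ξ ≤ 0 → φ ξ = 0) ∧
  (∀ ξ : ℝ, 0 < ξ → 0 < φ ξ) ∧
  (∀ ξ : ℝ, 0 < ξ → DifferentiableAt ℝ φ ξ) ∧
  (∀ ξ : ℝ, 0 < ξ → DifferentiableAt ℝ (phiPow D.m φ) ξ) ∧
  (∀ ξ : ℝ, 0 < ξ → DifferentiableAt ℝ (deriv (phiPow D.m φ)) ξ) ∧
  Filter.Tendsto (deriv (phiPow D.m φ)) (nhdsWithin 0 (Set.Ioi 0)) (nhds 0) ∧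
  (∀ ξ : ℝ, 0 < ξ →
    c * deriv φ ξ = deriv (deriv (phiPow D.m φ)) ξ - D.d (φ ξ) + D.b (φ (ξ - c * D.r))) ∧
  MonotoneOn φ (Set.Ioi 0) ∧
  Filter.Tendsto φ Filter.atTop (nhds D.κ)


/-- Derivative of a monotone function is nonnegative. -/
lemma mono_deriv_nonneg' {f : ℝ → ℝ} (hf : Monotone f) (x : ℝ) : 0 ≤ deriv f x := by
  by_cases hd : DifferentiableAt ℝ f x
  · have h := hasDerivAt_iff_tendsto_slope.1 hd.hasDerivAt
    refine ge_of_tendsto h ?_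
    filter_upwards [self_mem_nhdsWithin] with y hy
    rw [slope_def_field]
    rcases lt_or_gt_of_ne (Ne.symm (by exact hy)) with h1 | h1
    · exact div_nonneg (by have := hf h1.le; linarith) (by linarith)
    · rw [div_nonneg_iff]
      exact Or.inr ⟨by have := hf h1.le; linarith, by linarith⟩
  · rw [deriv_zero_of_not_differentiableAt hd]

/-- Monotone on `Ici 0` from nonnegative `derivWithin`. -/
lemma mono_of_derivWithin {f : ℝ → ℝ} (hf : ContDiffOn ℝ 2 f (Set.Ici 0))
    (h' : ∀ s : ℝ, 0 ≤ s → 0 ≤ derivWithin f (Set.Ici 0) s) : MonotoneOn f (Set.Ici 0) := by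
  have hdiff : ∀ x : ℝ, 0 < x → DifferentiableAt ℝ f x := fun x hx =>
    ((hf.differentiableOn (by norm_num)) x hx.le).differentiableAt (Ici_mem_nhds hx)
  apply monotoneOn_of_deriv_nonneg (convex_Ici 0) hf.continuousOn
  · rw [interior_Ici]
    exact fun x hx => (hdiff x hx).differentiableWithinAt
  · rw [interior_Ici]
    intro x hx
    rw [← derivWithin_of_mem_nhds (Ici_mem_nhds (α := ℝ) hx)]
    exact h' x (le_of_lt hx)

/-- One-sided Lipschitz bound on `[0, κ]`. -/
lemma lip_of_contDiffOn {f : ℝ → ℝ} {κ : ℝ} (hf : ContDiffOn ℝ 2 f (Set.Ici 0)) (hκ : 0 < κ) :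
    ∃ L : ℝ, 0 ≤ L ∧ ∀ s t : ℝ, 0 ≤ s → s ≤ t → t ≤ κ → f t - f s ≤ L * (t - s) := by
  have hderiv : ContinuousOn (derivWithin f (Set.Ici 0)) (Set.Ici 0) :=
    hf.continuousOn_derivWithin (uniqueDiffOn_Ici 0) (by norm_num)
  obtain ⟨L0, hL0⟩ := (isCompact_Icc (a := (0:ℝ)) (b := κ)).exists_bound_of_continuousOn
    (hderiv.mono (Set.Icc_subset_Ici_self))
  refine ⟨max L0 0, le_max_right _ _, ?_⟩
  intro s t hs hst htκ
  rcases eq_or_lt_of_le hst with rfl | hlt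
  · simp
  have hdiffAt : ∀ x ∈ Set.Ioo s t, HasDerivAt f (derivWithin f (Set.Ici 0) x) x := by
    intro x hx
    have hx0 : 0 < x := lt_of_le_of_lt hs hx.1
    have hnb : Set.Ici (0:ℝ) ∈ nhds x := Ici_mem_nhds hx0
    have hdx : DifferentiableAt ℝ f x :=
      ((hf.differentiableOn (by norm_num)) x hx0.le).differentiableAt hnb
    rw [derivWithin_of_mem_nhds hnb]
    exact hdx.hasDerivAt
  obtain ⟨c, hc, hslope⟩ := exists_hasDerivAt_eq_slope f _ hlt
    (hf.continuousOn.mono ((Set.Icc_subset_Ici_self).trans (Set.Ici_subset_Ici.2 hs))) hdiffAt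
  have hcmem : c ∈ Set.Icc (0:ℝ) κ := ⟨le_trans hs hc.1.le, le_trans hc.2.le htκ⟩
  have hbound : (f t - f s) / (t - s) ≤ max L0 0 := by
    rw [← hslope]
    exact le_trans (le_trans (le_abs_self _) (by simpa using hL0 c hcmem)) (le_max_left _ _)
  have := (div_le_iff₀ (sub_pos.2 hlt)).mp hbound
  linarith

/-- Grönwall: `V a = 0`, `V' ≤ K V` implies `V b ≤ 0`. -/
lemma gronwall_right {V : ℝ → ℝ} {a b K : ℝ} (hab : a ≤ b)
    (hV : ∀ x ∈ Set.Icc a b, DifferentiableAt ℝ V x) (h0 : V a = 0)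
    (hd : ∀ x ∈ Set.Icc a b, deriv V x ≤ K * V x) : V b ≤ 0 := by
  set G : ℝ → ℝ := fun x => V x * Real.exp (-K * x) with hG
  have hGd : ∀ x ∈ Set.Icc a b, HasDerivAt G ((deriv V x - K * V x) * Real.exp (-K * x)) x := by
    intro x hx
    have h1 : HasDerivAt (fun y : ℝ => Real.exp (-K * y)) (Real.exp (-K * x) * -K) x := by
      simpa using (((hasDerivAt_id x).const_mul (-K)).exp)
    have h2 := (hV x hx).hasDerivAt.mul h1
    rw [show (deriv V x - K * V x) * Real.exp (-K * x) = deriv V x * Real.exp (-K * x) + V x * (Real.exp (-K * x) * -K) by ring]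
    exact h2
  have hanti : AntitoneOn G (Set.Icc a b) := by
    apply antitoneOn_of_deriv_nonpos (convex_Icc a b)
    · exact fun x hx => ((hGd x hx).differentiableAt).continuousAt.continuousWithinAt
    · rw [interior_Icc]
      exact fun x hx => ((hGd x (Set.Ioo_subset_Icc_self hx)).differentiableAt).differentiableWithinAt
    · rw [interior_Icc]
      intro x hx
      have hx' := Set.Ioo_subset_Icc_self hx
      rw [(hGd x hx').deriv]
      have h3 := hd x hx'
      have he : 0 < Real.exp (-K * x) := Real.exp_pos _
      nlinarith
  have h4 := hanti (Set.left_mem_Icc.2 hab) (Set.right_mem_Icc.2 hab) hab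
  have he : 0 < Real.exp (-K * b) := Real.exp_pos _
  simp only [hG, h0, zero_mul] at h4
  nlinarith

/-- Grönwall backwards: `V b = 0`, `-(K V) ≤ V'` implies `V a ≤ 0`. -/
lemma gronwall_left {V : ℝ → ℝ} {a b K : ℝ} (hab : a ≤ b)
    (hV : ∀ x ∈ Set.Icc a b, DifferentiableAt ℝ V x) (h0 : V b = 0)
    (hd : ∀ x ∈ Set.Icc a b, -(K * V x) ≤ deriv V x) : V a ≤ 0 := by
  set G : ℝ → ℝ := fun x => V x * Real.exp (K * x) with hG
  have hGd : ∀ x ∈ Set.Icc a b, HasDerivAt G ((deriv V x + K * V x) * Real.exp (K * x)) x := by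
    intro x hx
    have h1 : HasDerivAt (fun y : ℝ => Real.exp (K * y)) (Real.exp (K * x) * K) x := by
      simpa using (((hasDerivAt_id x).const_mul K).exp)
    have h2 := (hV x hx).hasDerivAt.mul h1
    rw [show (deriv V x + K * V x) * Real.exp (K * x) = deriv V x * Real.exp (K * x) + V x * (Real.exp (K * x) * K) by ring]
    exact h2
  have hmono : MonotoneOn G (Set.Icc a b) := by
    apply monotoneOn_of_deriv_nonneg (convex_Icc a b)
    · exact fun x hx => ((hGd x hx).differentiableAt).continuousAt.continuousWithinAt
    · rw [interior_Icc]
      exact fun x hx => ((hGd x (Set.Ioo_subset_Icc_self hx)).differentiableAt).differentiableWithinAt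
    · rw [interior_Icc]
      intro x hx
      have hx' := Set.Ioo_subset_Icc_self hx
      rw [(hGd x hx').deriv]
      have h3 := hd x hx'
      have he : 0 < Real.exp (K * x) := Real.exp_pos _
      nlinarith
  have h4 := hmono (Set.left_mem_Icc.2 hab) (Set.right_mem_Icc.2 hab) hab
  have he : 0 < Real.exp (K * a) := Real.exp_pos _
  simp only [hG, h0, zero_mul] at h4
  nlinarith

set_option maxHeartbeats 1000000 in
/-- the sharp wave is strictly increasing on `(0, ∞)`, its flux
`((φ*)^m)'` is positive on `(0, ∞)` and tends to `0` at `+∞`. -/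
theorem sharp_wave_strict_mono_flux (D : FisherData) (cstar : ℝ) (φ : ℝ → ℝ)
    (hcs : 0 < cstar) (hw : IsSharpWave D cstar φ) :
    StrictMonoOn φ (Set.Ioi 0) ∧
    (∀ ξ : ℝ, 0 < ξ → 0 < deriv (phiPow D.m φ) ξ) ∧
    Filter.Tendsto (deriv (phiPow D.m φ)) Filter.atTop (nhds 0) := by
  obtain ⟨hcont, hzero, hpos, hdiff, hudiff, hwdiff, hflux0, heqn, hmonoI, hlim⟩ := hw
  have hm1 : (1:ℝ) < D.m := D.hm
  have hm0 : (0:ℝ) < D.m := lt_trans one_pos hm1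
  have hmm1 : (0:ℝ) ≤ D.m - 1 := by linarith
  have hφ0 : ∀ ξ : ℝ, 0 ≤ φ ξ := by
    intro ξ
    rcases le_or_gt ξ 0 with h | h
    · rw [hzero ξ h]
    · exact (hpos ξ h).le
  have hφmono : Monotone φ := by
    intro x y hxy
    rcases le_or_gt y 0 with hy | hy
    · rw [hzero x (hxy.trans hy), hzero y hy]
    · rcases le_or_gt x 0 with hx | hx
      · rw [hzero x hx]; exact (hpos y hy).le
      · exact hmonoI hx hy hxy
  have hφκ : ∀ ξ : ℝ, φ ξ ≤ D.κ := fun ξ => hφmono.ge_of_tendsto hlim ξ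
  have hdmono := mono_of_derivWithin D.hd_smooth D.hd'
  have hbmono := mono_of_derivWithin D.hb_smooth D.hb'
  have hdnn : ∀ s : ℝ, 0 ≤ s → 0 ≤ D.d s := by
    intro s hs
    have := hdmono (Set.mem_Ici.2 le_rfl) (Set.mem_Ici.2 hs) hs
    rw [D.hd0] at this; exact this
  have hbnn : ∀ s : ℝ, 0 ≤ s → 0 ≤ D.b s := by
    intro s hs
    have := hbmono (Set.mem_Ici.2 le_rfl) (Set.mem_Ici.2 hs) hs
    rw [D.hb0] at this; exact this
  obtain ⟨L, hL0, hLip⟩ := lip_of_contDiffOn D.hd_smooth D.hκ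
  have hkey : ∀ ξ : ℝ, 0 < ξ →
      HasDerivAt (phiPow D.m φ) (D.m * φ ξ ^ (D.m - 1) * deriv φ ξ) ξ := by
    intro ξ hξ
    have h1 : HasDerivAt (fun x : ℝ => x ^ D.m) (D.m * φ ξ ^ (D.m - 1)) (φ ξ) :=
      Real.hasDerivAt_rpow_const (Or.inl (hpos ξ hξ).ne')
    have h2 := h1.comp ξ (hdiff ξ hξ).hasDerivAt
    exact h2
  have hwval : ∀ ξ : ℝ, 0 < ξ →
      deriv (phiPow D.m φ) ξ = D.m * φ ξ ^ (D.m - 1) * deriv φ ξ :=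
    fun ξ hξ => (hkey ξ hξ).deriv
  have hφ'nn : ∀ ξ : ℝ, 0 ≤ deriv φ ξ := mono_deriv_nonneg' hφmono
  have hwnn : ∀ ξ : ℝ, 0 < ξ → 0 ≤ deriv (phiPow D.m φ) ξ := by
    intro ξ hξ
    rw [hwval ξ hξ]
    exact mul_nonneg (mul_nonneg hm0.le (Real.rpow_nonneg (hφ0 ξ) _)) (hφ'nn ξ)
  have hucont : Continuous (phiPow D.m φ) := by
    unfold phiPow; exact hcont.rpow_const (fun x => Or.inr hm0.le)
  have humono : Monotone (phiPow D.m φ) := by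
    intro x y hxy
    exact Real.rpow_le_rpow (hφ0 x) (hφmono hxy) hm0.le
  have hulim : Tendsto (phiPow D.m φ) atTop (nhds (D.κ ^ D.m)) := by
    unfold phiPow; exact hlim.rpow_const (Or.inr hm0.le)
  have huκ : ∀ ξ : ℝ, phiPow D.m φ ξ ≤ D.κ ^ D.m := fun ξ => humono.ge_of_tendsto hulim ξ
  -- facts at an interior zero of the flux
  have hminfacts : ∀ ξ0 : ℝ, 0 < ξ0 → deriv (phiPow D.m φ) ξ0 = 0 →
      deriv φ ξ0 = 0 ∧ D.b (φ (ξ0 - cstar * D.r)) = D.d (φ ξ0) := by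
    intro ξ0 hξ0 hw0
    have hφ' : deriv φ ξ0 = 0 := by
      have h1 : D.m * φ ξ0 ^ (D.m - 1) * deriv φ ξ0 = 0 := by
        rw [← hwval ξ0 hξ0]; exact hw0
      have h2 : 0 < D.m * φ ξ0 ^ (D.m - 1) := by
        have := Real.rpow_pos_of_pos (hpos ξ0 hξ0) (D.m - 1)
        positivity
      exact (mul_eq_zero.mp h1).resolve_left h2.ne'
    have hlm : IsLocalMin (deriv (phiPow D.m φ)) ξ0 := by
      have h : ∀ᶠ x in nhds ξ0, deriv (phiPow D.m φ) ξ0 ≤ deriv (phiPow D.m φ) x := by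
        filter_upwards [Ioi_mem_nhds hξ0] with x hx
        rw [hw0]; exact hwnn x hx
      exact h
    have hw' : deriv (deriv (phiPow D.m φ)) ξ0 = 0 := hlm.deriv_eq_zero
    have heqn0 := heqn ξ0 hξ0
    rw [hφ', hw'] at heqn0
    constructor
    · exact hφ'
    · linarith
  -- Step R : a zero of the flux forces φ ξ0 = κ
  have stepR : ∀ ξ0 : ℝ, 0 < ξ0 → deriv (phiPow D.m φ) ξ0 = 0 → φ ξ0 = D.κ := by
    intro ξ0 hξ0 hw0
    obtain ⟨hφ'0, hkeyeq⟩ := hminfacts ξ0 hξ0 hw0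
    have hs0 : 0 < φ ξ0 := hpos ξ0 hξ0
    set M := D.m * φ ξ0 ^ (D.m - 1) with hMdef
    have hM : 0 < M := by
      have := Real.rpow_pos_of_pos hs0 (D.m - 1); positivity
    set C := M⁻¹ with hCdef
    have hC : 0 < C := inv_pos.2 hM
    have hφ'le : ∀ x : ℝ, ξ0 ≤ x → deriv φ x ≤ C * deriv (phiPow D.m φ) x := by
      intro x hx
      have hx0 : 0 < x := lt_of_lt_of_le hξ0 hx
      have h1 : φ ξ0 ^ (D.m - 1) ≤ φ x ^ (D.m - 1) :=
        Real.rpow_le_rpow hs0.le (hφmono hx) hmm1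
      have h2 : M * deriv φ x ≤ deriv (phiPow D.m φ) x := by
        rw [hwval x hx0, hMdef]
        exact mul_le_mul_of_nonneg_right (mul_le_mul_of_nonneg_left h1 hm0.le) (hφ'nn x)
      calc deriv φ x = C * (M * deriv φ x) := by
            rw [hCdef, inv_mul_cancel_left₀ hM.ne']
        _ ≤ C * deriv (phiPow D.m φ) x := mul_le_mul_of_nonneg_left h2 hC.le
    have hFmono : MonotoneOn (fun x => C * phiPow D.m φ x - φ x) (Set.Ici ξ0) := by
      apply monotoneOn_of_deriv_nonneg (convex_Ici ξ0)
      · exact ((continuous_const.mul hucont).sub hcont).continuousOn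
      · rw [interior_Ici]
        intro x hx
        have hx0 : 0 < x := lt_trans hξ0 hx
        exact (((hudiff x hx0).const_mul C).sub (hdiff x hx0)).differentiableWithinAt
      · rw [interior_Ici]
        intro x hx
        have hx0 : 0 < x := lt_trans hξ0 hx
        have hD : HasDerivAt (fun x => C * phiPow D.m φ x - φ x)
            (C * deriv (phiPow D.m φ) x - deriv φ x) x :=
          ((hudiff x hx0).hasDerivAt.const_mul C).sub (hdiff x hx0).hasDerivAt
        rw [hD.deriv]
        have := hφ'le x hx.le
        linarith
    have hφle : ∀ x : ℝ, ξ0 ≤ x →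
        φ x - φ ξ0 ≤ C * (phiPow D.m φ x - phiPow D.m φ ξ0) := by
      intro x hx
      have := hFmono (Set.self_mem_Ici) (Set.mem_Ici.2 hx) hx
      simp only at this
      linarith
    set K := max (cstar * C + 1) (L * C) with hKdef
    have huconst : ∀ T : ℝ, ξ0 ≤ T → phiPow D.m φ T = phiPow D.m φ ξ0 := by
      intro T hT
      have hVd : ∀ x ∈ Set.Icc ξ0 T, DifferentiableAt ℝ
          (fun x => deriv (phiPow D.m φ) x + (phiPow D.m φ x - phiPow D.m φ ξ0)) x := by
        intro x hx
        have hx0 : 0 < x := lt_of_lt_of_le hξ0 hx.1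
        exact (hwdiff x hx0).add ((hudiff x hx0).sub_const _)
      have hV0 : deriv (phiPow D.m φ) ξ0 + (phiPow D.m φ ξ0 - phiPow D.m φ ξ0) = 0 := by
        rw [hw0]; ring
      have hVderiv : ∀ x ∈ Set.Icc ξ0 T,
          deriv (fun x => deriv (phiPow D.m φ) x + (phiPow D.m φ x - phiPow D.m φ ξ0)) x ≤
            K * (deriv (phiPow D.m φ) x + (phiPow D.m φ x - phiPow D.m φ ξ0)) := by
        intro x hx
        have hx0 : 0 < x := lt_of_lt_of_le hξ0 hx.1
        have hDV : HasDerivAt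
            (fun x => deriv (phiPow D.m φ) x + (phiPow D.m φ x - phiPow D.m φ ξ0))
            (deriv (deriv (phiPow D.m φ)) x + deriv (phiPow D.m φ) x) x :=
          (hwdiff x hx0).hasDerivAt.add ((hudiff x hx0).hasDerivAt.sub_const _)
        rw [hDV.deriv]
        have heq := heqn x hx0
        have hb1 : D.d (φ ξ0) ≤ D.b (φ (x - cstar * D.r)) := by
          rw [← hkeyeq]
          exact hbmono (Set.mem_Ici.2 (hφ0 _)) (Set.mem_Ici.2 (hφ0 _))
            (hφmono (by linarith [hx.1]))
        have hd1 : D.d (φ x) - D.d (φ ξ0) ≤ L * (φ x - φ ξ0) :=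
          hLip (φ ξ0) (φ x) hs0.le (hφmono hx.1) (hφκ x)
        have h5 : L * (φ x - φ ξ0) ≤ L * (C * (phiPow D.m φ x - phiPow D.m φ ξ0)) :=
          mul_le_mul_of_nonneg_left (hφle x hx.1) hL0
        have hc1 : cstar * deriv φ x ≤ cstar * (C * deriv (phiPow D.m φ) x) :=
          mul_le_mul_of_nonneg_left (hφ'le x hx.1) hcs.le
        have hwnn' := hwnn x hx0
        have hunn : 0 ≤ phiPow D.m φ x - phiPow D.m φ ξ0 := by
          have := humono hx.1; linarith
        have hK1 : cstar * C + 1 ≤ K := le_max_left _ _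
        have hK2 : L * C ≤ K := le_max_right _ _
        have hKw := mul_le_mul_of_nonneg_right hK1 hwnn'
        have hKu := mul_le_mul_of_nonneg_right hK2 hunn
        nlinarith [hKw, hKu]
      have hVT := gronwall_right hT hVd hV0 hVderiv
      have h1 : 0 ≤ deriv (phiPow D.m φ) T := hwnn T (lt_of_lt_of_le hξ0 hT)
      have h2 : phiPow D.m φ ξ0 ≤ phiPow D.m φ T := humono hT
      linarith
    have hφconst : ∀ T : ℝ, ξ0 ≤ T → φ T = φ ξ0 := by
      intro T hT
      by_contra hne
      have hlt : φ ξ0 < φ T := lt_of_le_of_ne (hφmono hT) (Ne.symm hne)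
      have h3 : φ ξ0 ^ D.m < φ T ^ D.m := Real.rpow_lt_rpow hs0.le hlt hm0
      have hU := huconst T hT
      simp only [phiPow] at hU
      linarith
    have hconstlim : Tendsto (fun _ : ℝ => φ ξ0) atTop (nhds D.κ) := by
      apply hlim.congr'
      filter_upwards [eventually_ge_atTop ξ0] with T hT
      exact hφconst T hT
    exact tendsto_nhds_unique tendsto_const_nhds hconstlim
  -- Step L : a zero of the flux propagates to ξ0 / 2
  have stepL : ∀ ξ0 : ℝ, 0 < ξ0 → deriv (phiPow D.m φ) ξ0 = 0 →
      deriv (phiPow D.m φ) (ξ0 / 2) = 0 := by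
    intro ξ0 hξ0 hw0
    obtain ⟨hφ'0, hkeyeq⟩ := hminfacts ξ0 hξ0 hw0
    have hκ0 : φ ξ0 = D.κ := stepR ξ0 hξ0 hw0
    have hη0 : 0 < ξ0 / 2 := by positivity
    have hηξ : ξ0 / 2 ≤ ξ0 := by linarith
    have ha : 0 < φ (ξ0 / 2) := hpos _ hη0
    set M := D.m * φ (ξ0 / 2) ^ (D.m - 1) with hMdef
    have hM : 0 < M := by
      have := Real.rpow_pos_of_pos ha (D.m - 1); positivity
    set C := M⁻¹ with hCdef
    have hC : 0 < C := inv_pos.2 hM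
    have hφ'le : ∀ x : ℝ, ξ0 / 2 ≤ x → deriv φ x ≤ C * deriv (phiPow D.m φ) x := by
      intro x hx
      have hx0 : 0 < x := lt_of_lt_of_le hη0 hx
      have h1 : φ (ξ0 / 2) ^ (D.m - 1) ≤ φ x ^ (D.m - 1) :=
        Real.rpow_le_rpow ha.le (hφmono hx) hmm1
      have h2 : M * deriv φ x ≤ deriv (phiPow D.m φ) x := by
        rw [hwval x hx0, hMdef]
        exact mul_le_mul_of_nonneg_right (mul_le_mul_of_nonneg_left h1 hm0.le) (hφ'nn x)
      calc deriv φ x = C * (M * deriv φ x) := by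
            rw [hCdef, inv_mul_cancel_left₀ hM.ne']
        _ ≤ C * deriv (phiPow D.m φ) x := mul_le_mul_of_nonneg_left h2 hC.le
    have hFmono : MonotoneOn (fun x => C * phiPow D.m φ x - φ x) (Set.Ici (ξ0 / 2)) := by
      apply monotoneOn_of_deriv_nonneg (convex_Ici (ξ0 / 2))
      · exact ((continuous_const.mul hucont).sub hcont).continuousOn
      · rw [interior_Ici]
        intro x hx
        have hx0 : 0 < x := lt_trans hη0 hx
        exact (((hudiff x hx0).const_mul C).sub (hdiff x hx0)).differentiableWithinAt
      · rw [interior_Ici]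
        intro x hx
        have hx0 : 0 < x := lt_trans hη0 hx
        have hD : HasDerivAt (fun x => C * phiPow D.m φ x - φ x)
            (C * deriv (phiPow D.m φ) x - deriv φ x) x :=
          ((hudiff x hx0).hasDerivAt.const_mul C).sub (hdiff x hx0).hasDerivAt
        rw [hD.deriv]
        have := hφ'le x hx.le
        linarith
    have hφle : ∀ x : ℝ, ξ0 / 2 ≤ x → x ≤ ξ0 →
        φ ξ0 - φ x ≤ C * (phiPow D.m φ ξ0 - phiPow D.m φ x) := by
      intro x hx hx'
      have := hFmono (Set.mem_Ici.2 hx) (Set.mem_Ici.2 hηξ) hx'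
      simp only at this
      linarith
    set K := max (L * C) 1 with hKdef
    have hVd : ∀ x ∈ Set.Icc (ξ0 / 2) ξ0, DifferentiableAt ℝ
        (fun x => deriv (phiPow D.m φ) x + (phiPow D.m φ ξ0 - phiPow D.m φ x)) x := by
      intro x hx
      have hx0 : 0 < x := lt_of_lt_of_le hη0 hx.1
      exact (hwdiff x hx0).add ((hudiff x hx0).const_sub _)
    have hV0 : deriv (phiPow D.m φ) ξ0 + (phiPow D.m φ ξ0 - phiPow D.m φ ξ0) = 0 := by
      rw [hw0]; ring
    have hVderiv : ∀ x ∈ Set.Icc (ξ0 / 2) ξ0,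
        -(K * (deriv (phiPow D.m φ) x + (phiPow D.m φ ξ0 - phiPow D.m φ x))) ≤
          deriv (fun x => deriv (phiPow D.m φ) x + (phiPow D.m φ ξ0 - phiPow D.m φ x)) x := by
      intro x hx
      have hx0 : 0 < x := lt_of_lt_of_le hη0 hx.1
      have hDV : HasDerivAt
          (fun x => deriv (phiPow D.m φ) x + (phiPow D.m φ ξ0 - phiPow D.m φ x))
          (deriv (deriv (phiPow D.m φ)) x + -deriv (phiPow D.m φ) x) x :=
        (hwdiff x hx0).hasDerivAt.add ((hudiff x hx0).hasDerivAt.const_sub _)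
      rw [hDV.deriv]
      have heq := heqn x hx0
      have hb1 : D.b (φ (x - cstar * D.r)) ≤ D.d (φ ξ0) := by
        rw [← hkeyeq]
        exact hbmono (Set.mem_Ici.2 (hφ0 _)) (Set.mem_Ici.2 (hφ0 _))
          (hφmono (by linarith [hx.2]))
      have hd1 : D.d (φ ξ0) - D.d (φ x) ≤ L * (φ ξ0 - φ x) :=
        hLip (φ x) (φ ξ0) (hφ0 x) (hφmono hx.2) (le_of_eq hκ0)
      have h5 : L * (φ ξ0 - φ x) ≤ L * (C * (phiPow D.m φ ξ0 - phiPow D.m φ x)) :=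
        mul_le_mul_of_nonneg_left (hφle x hx.1 hx.2) hL0
      have hc1 : 0 ≤ cstar * deriv φ x := mul_nonneg hcs.le (hφ'nn x)
      have hwnn' := hwnn x hx0
      have hunn : 0 ≤ phiPow D.m φ ξ0 - phiPow D.m φ x := by
        have := humono hx.2; linarith
      have hK1 : L * C ≤ K := le_max_left _ _
      have hK2 : (1:ℝ) ≤ K := le_max_right _ _
      have hKw := mul_le_mul_of_nonneg_right hK2 hwnn'
      have hKu := mul_le_mul_of_nonneg_right hK1 hunn
      nlinarith [hKw, hKu]
    have hVη := gronwall_left hηξ hVd hV0 hVderiv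
    have h1 : 0 ≤ deriv (phiPow D.m φ) (ξ0 / 2) := hwnn _ hη0
    have h2 : phiPow D.m φ (ξ0 / 2) ≤ phiPow D.m φ ξ0 := humono hηξ
    linarith
  -- positivity of the flux
  have hwpos : ∀ ξ : ℝ, 0 < ξ → 0 < deriv (phiPow D.m φ) ξ := by
    intro ξ hξ
    rcases (hwnn ξ hξ).lt_or_eq with h | h
    · exact h
    · exfalso
      have hz : ∀ n : ℕ, deriv (phiPow D.m φ) (ξ / 2 ^ n) = 0 := by
        intro n
        induction n with
        | zero => simpa using h.symm
        | succ n ih =>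
          have hpos' : 0 < ξ / 2 ^ n := by positivity
          have h2 := stepL _ hpos' ih
          have h3 : ξ / 2 ^ n / 2 = ξ / 2 ^ (n + 1) := by
            rw [pow_succ]; ring
          rwa [h3] at h2
      have hκn : ∀ n : ℕ, φ (ξ / 2 ^ n) = D.κ := fun n => stepR _ (by positivity) (hz n)
      have htend : Tendsto (fun n : ℕ => ξ / 2 ^ n) atTop (nhds 0) := by
        have h2 : Tendsto (fun n : ℕ => (1 / 2 : ℝ) ^ n) atTop (nhds 0) :=
          tendsto_pow_atTop_nhds_zero_of_lt_one (by norm_num) (by norm_num)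
        have h3 := h2.const_mul ξ
        rw [mul_zero] at h3
        convert h3 using 2 with n
        rw [div_pow, one_pow]
        ring
      have hφ0' : Tendsto (fun n : ℕ => φ (ξ / 2 ^ n)) atTop (nhds (φ 0)) :=
        (hcont.tendsto 0).comp htend
      rw [hzero 0 le_rfl] at hφ0'
      have hκlim : Tendsto (fun n : ℕ => φ (ξ / 2 ^ n)) atTop (nhds D.κ) := by
        simp only [hκn]
        exact tendsto_const_nhds
      have := tendsto_nhds_unique hφ0' hκlim
      linarith [D.hκ]
  -- goal 1 : strict monotonicity of φ
  have hustrict : StrictMonoOn (phiPow D.m φ) (Set.Ioi 0) := by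
    apply strictMonoOn_of_deriv_pos (convex_Ioi 0) hucont.continuousOn
    intro x hx
    rw [interior_Ioi] at hx
    exact hwpos x hx
  have goal1 : StrictMonoOn φ (Set.Ioi 0) := by
    intro x hx y hy hxy
    rcases (hmonoI hx hy hxy.le).lt_or_eq with h1 | h1
    · exact h1
    · exfalso
      have h2 := hustrict hx hy hxy
      simp only [phiPow, h1] at h2
      exact lt_irrefl _ h2
  -- goal 3 : flux tends to 0 at +∞
  have goal3 : Tendsto (deriv (phiPow D.m φ)) atTop (nhds 0) := by
    rw [Metric.tendsto_atTop]
    intro ε hε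
    set B := D.b D.κ + 1 with hBdef
    have hB : 0 < B := by
      have := hbnn D.κ D.hκ.le; rw [hBdef]; linarith
    set δ := ε / (2 * B) with hδdef
    have hδ : 0 < δ := by rw [hδdef]; positivity
    obtain ⟨N0, hN0⟩ := (Metric.tendsto_atTop.1 hulim) (ε * δ / 4) (by positivity)
    refine ⟨max N0 1, ?_⟩
    intro ξ hξ
    have hξ1 : (1:ℝ) ≤ ξ := le_trans (le_max_right _ _) hξ
    have hξ0 : 0 < ξ := by linarith
    have hwnnξ := hwnn ξ hξ0
    rw [Real.dist_eq, sub_zero, abs_of_nonneg hwnnξ]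
    by_contra hcon
    push_neg at hcon
    have hw'lb : ∀ x : ℝ, 0 < x → -(D.b D.κ) ≤ deriv (deriv (phiPow D.m φ)) x := by
      intro x hx
      have heq := heqn x hx
      have h1 : 0 ≤ cstar * deriv φ x := mul_nonneg hcs.le (hφ'nn x)
      have h2 : 0 ≤ D.d (φ x) := hdnn _ (hφ0 _)
      have h3 : D.b (φ (x - cstar * D.r)) ≤ D.b D.κ :=
        hbmono (Set.mem_Ici.2 (hφ0 _)) (Set.mem_Ici.2 D.hκ.le) (hφκ _)
      linarith
    have hwB : MonotoneOn (fun x => deriv (phiPow D.m φ) x + B * x) (Set.Ici ξ) := by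
      apply monotoneOn_of_deriv_nonneg (convex_Ici ξ)
      · intro x hx
        have hx0 : 0 < x := lt_of_lt_of_le hξ0 hx
        exact ((hwdiff x hx0).add ((differentiableAt_id.const_mul B))).continuousAt.continuousWithinAt
      · rw [interior_Ici]
        intro x hx
        have hx0 : 0 < x := lt_trans hξ0 hx
        exact ((hwdiff x hx0).add ((differentiableAt_id.const_mul B))).differentiableWithinAt
      · rw [interior_Ici]
        intro x hx
        have hx0 : 0 < x := lt_trans hξ0 hx
        have hD : HasDerivAt (fun x => deriv (phiPow D.m φ) x + B * x)
            (deriv (deriv (phiPow D.m φ)) x + B) x := by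
          have := ((hwdiff x hx0).hasDerivAt.add (((hasDerivAt_id x).const_mul B)))
          rw [mul_one] at this
          exact this
        rw [hD.deriv]
        have := hw'lb x hx0
        rw [hBdef]
        linarith
    have hwlow : ∀ t : ℝ, ξ ≤ t → t ≤ ξ + δ → ε / 2 ≤ deriv (phiPow D.m φ) t := by
      intro t ht1 ht2
      have hmono := hwB (Set.self_mem_Ici) (Set.mem_Ici.2 ht1) ht1
      simp only at hmono
      have hBδ : B * δ = ε / 2 := by
        rw [hδdef]; field_simp
      nlinarith [hB]
    obtain ⟨ζ, hζ, hslope⟩ := exists_hasDerivAt_eq_slope (phiPow D.m φ)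
      (deriv (phiPow D.m φ)) (by linarith : ξ < ξ + δ)
      hucont.continuousOn
      (fun x hx => (hudiff x (by linarith [hx.1] : (0:ℝ) < x)).hasDerivAt)
    have h5 : deriv (phiPow D.m φ) ζ = (phiPow D.m φ (ξ + δ) - phiPow D.m φ ξ) / δ := by
      rw [hslope]; congr 1; ring
    have h6 : phiPow D.m φ (ξ + δ) ≤ D.κ ^ D.m := huκ _
    have h7 : D.κ ^ D.m - ε * δ / 4 < phiPow D.m φ ξ := by
      have hh := hN0 ξ (le_trans (le_max_left _ _) hξ)
      rw [Real.dist_eq] at hh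
      have habs := abs_lt.1 hh
      linarith [habs.1]
    have h8 : ε / 2 ≤ deriv (phiPow D.m φ) ζ := hwlow ζ hζ.1.le hζ.2.le
    rw [h5] at h8
    have h10 : ε / 2 * δ ≤ phiPow D.m φ (ξ + δ) - phiPow D.m φ ξ := (le_div_iff₀ hδ).mp h8
    nlinarith [mul_pos hε hδ]
  exact ⟨goal1, hwpos, goal3⟩
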